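/- Let s be a subset of {1,…,16} that is an independent set of G₃ (no two elements of s form a pair in E₃). If s contains exactly one element of {1,2,3,4}, exactly one element of {5,6,7,8}, and exactly one element of {9,10,11,12}, then s contains no element of {13,14,15,16}. (This is the Hardy-type logical proof of contextuality: in any noncontextual hidden-variable assignment satisfying the first three normalization conditions, the probability of the fourth group of events is 0, whereas quantum theory predicts 1.) -/

import Mathlib

/-- The 72 edges of the exclusivity graph G₃ (complement of the Shrikhande
graph), as unordered pairs (i,j) with 1 ≤ i < j ≤ 16. -/
def E3 : Finset (ℕ × ℕ) :=
  {(1,2),(1,3),(1,4),(1,5),(1,6),(1,10),(1,12),(1,14),(1,15),(2,3),(2,4),(2,5),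
   (2,6),(2,9),(2,11),(2,13),(2,16),(3,4),(3,7),(3,8),(3,10),(3,12),(3,13),
   (3,16),(4,7),(4,8),(4,9),(4,11),(4,14),(4,15),(5,6),(5,7),(5,8),(5,9),
   (5,12),(5,14),(5,16),(6,7),(6,8),(6,10),(6,11),(6,13),(6,15),(7,8),(7,10),
   (7,11),(7,14),(7,16),(8,9),(8,12),(8,13),(8,15),(9,10),(9,11),(9,12),
   (9,13),(9,14),(10,11),(10,12),(10,13),(10,14),(11,12),(11,15),(11,16),
   (12,15),(12,16),(13,14),(13,15),(13,16),(14,15),(14,16),(15,16)}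

/-- Adjacency relation of the graph G₃ on vertices `Fin 16` (1-based in E₃):
i and j are adjacent iff the unordered pair {i+1, j+1} belongs to E₃. -/
def G3Adj (i j : Fin 16) : Prop :=
  (i.val + 1, j.val + 1) ∈ E3 ∨ (j.val + 1, i.val + 1) ∈ E3

/-! Let a, b, c be the vertices of `s` in the blocks {1,…,4}, {5,…,8}, {9,…,12}. A finite check
shows that whenever a, b, c are pairwise non-adjacent, every vertex of {13,…,16} is adjacent to
one of them, so none of those vertices lies in the independent set `s`. -/

instance : DecidableRel G3Adj := fun _ _ => inferInstanceAs (Decidable (_ ∨ _))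

-- Each quantifier is followed by its range condition, so the check visits only 4⁴ quadruples.
theorem G3Adj_of_pairwise_not_G3Adj :
    ∀ a : Fin 16, a.val < 4 → ∀ b : Fin 16, 4 ≤ b.val → b.val < 8 → ¬ G3Adj a b →
    ∀ c : Fin 16, 8 ≤ c.val → c.val < 12 → ¬ G3Adj a c → ¬ G3Adj b c →
    ∀ d : Fin 16, 12 ≤ d.val → G3Adj a d ∨ G3Adj b d ∨ G3Adj c d := by
  decide +kernel

theorem G3_hardy_logical_contextuality (s : Finset (Fin 16))
    (hind : ∀ i ∈ s, ∀ j ∈ s, i ≠ j → ¬ G3Adj i j)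
    (h1 : (s.filter (fun i => i.val < 4)).card = 1)
    (h2 : (s.filter (fun i => 4 ≤ i.val ∧ i.val < 8)).card = 1)
    (h3 : (s.filter (fun i => 8 ≤ i.val ∧ i.val < 12)).card = 1) :
    ∀ i ∈ s, i.val < 12 := by
  have indep : ∀ i ∈ s, ∀ j ∈ s, i.val < j.val → ¬ G3Adj i j :=
    fun i hi j hj hij => hind i hi j hj (ne_of_lt hij)
  obtain ⟨a, ha, ha'⟩ := Finset.filter_nonempty_iff.mp (Finset.card_pos.mp (h1 ▸ one_pos))
  obtain ⟨b, hb, hb'⟩ := Finset.filter_nonempty_iff.mp (Finset.card_pos.mp (h2 ▸ one_pos))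
  obtain ⟨c, hc, hc'⟩ := Finset.filter_nonempty_iff.mp (Finset.card_pos.mp (h3 ▸ one_pos))
  intro d hd
  by_contra! hd'
  obtain had | hbd | hcd := G3Adj_of_pairwise_not_G3Adj a ha' b hb'.1 hb'.2
    (indep a ha b hb (by omega)) c hc'.1 hc'.2 (indep a ha c hc (by omega))
    (indep b hb c hc (by omega)) d hd'
  exacts [indep a ha d hd (by omega) had, indep b hb d hd (by omega) hbd,
    indep c hc d hd (by omega) hcd]
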